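/- arXiv:0910.0799 — 5 statements merged into one kernel-verified Lean document; each statement's English description precedes it below -/
import Mathlib

section
/- Let K be a finite extension of Q_p with residue field of cardinality q, and let X = {x ∈ K : ord(x) is even} ∪ {0}. Then lim_{k→∞} q^{2k}·μ(X ∩ B(0,2k)) = (1+q^{-1})^{-1} while lim_{k→∞} q^{2k-1}·μ(X ∩ B(0,2k-1)) = (1+q)^{-1}; in particular the two subsequential limits of q^ℓ·μ(X ∩ B(0,ℓ)) along even and odd ℓ are distinct. -/
open Filter Topology MeasureTheory Metric
open scoped Pointwise

/-!
Let `X` be the set of elements of even order, `B n` the ball of radius `q⁻ⁿ` and `ϖ` a uniformizer.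
For even `n`, `X ∩ B n` is the disjoint union of the shell `B n \ B (n + 1)`, of measure
`q⁻ⁿ (1 - q⁻¹)`, and of `X ∩ B (n + 2) = ϖ² • (X ∩ B n)`, of measure `q⁻² μ (X ∩ B n)`. Solving this
linear equation gives `μ (X ∩ B n) = q⁻ⁿ / (1 + q⁻¹)`; since `X ∩ B (n - 1) = X ∩ B n`, both
renormalised sequences are constant.
-/

section

variable {K : Type*} [NormedField K] {q : ℝ} {ord : K → ℤ} {ϖ : K}

def ordBall (ord : K → ℤ) (n : ℤ) : Set K := {x | x = 0 ∨ n ≤ ord x}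

def evenOrdSet (ord : K → ℤ) : Set K := {x | x ≠ 0 ∧ Even (ord x)} ∪ {0}

theorem ord_eq_of_norm_eq (hq : 1 < q) (hord : ∀ x : K, x ≠ 0 → ‖x‖ = q ^ (-(ord x)))
    {x : K} (hx : x ≠ 0) {n : ℤ} (h : ‖x‖ = q ^ (-n)) : ord x = n := by
  rw [hord x hx] at h
  exact neg_injective (zpow_right_injective₀ (by linarith) hq.ne' h)

theorem ord_zpow_mul (hq : 1 < q) (hord : ∀ x : K, x ≠ 0 → ‖x‖ = q ^ (-(ord x)))
    (hϖ : ‖ϖ‖ = q⁻¹) (m : ℤ) {x : K} (hx : x ≠ 0) : ord (ϖ ^ m * x) = m + ord x := by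
  have hϖ0 : ϖ ≠ 0 := norm_ne_zero_iff.mp (by rw [hϖ]; positivity)
  refine ord_eq_of_norm_eq hq hord (mul_ne_zero (zpow_ne_zero m hϖ0) hx) ?_
  rw [norm_mul, norm_zpow, hϖ, hord x hx, inv_zpow', ← zpow_add₀ (by positivity), neg_add]

theorem ordBall_anti : Antitone (ordBall ord) := by
  rintro m n hmn x (hx | hx)
  · exact Or.inl hx
  · exact Or.inr (hmn.trans hx)

theorem ordBall_eq_closedBall (hq : 1 < q) (hord : ∀ x : K, x ≠ 0 → ‖x‖ = q ^ (-(ord x)))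
    (n : ℤ) : ordBall ord n = closedBall 0 (q ^ (-n)) := by
  ext x
  rw [mem_closedBall_zero_iff]
  rcases eq_or_ne x 0 with rfl | hx
  · simpa [ordBall] using (zpow_pos (by linarith) _).le
  · simp only [ordBall, Set.mem_ofPred_eq, hx, false_or, hord x hx,
      zpow_le_zpow_iff_right₀ hq, neg_le_neg_iff]

theorem zpow_smul_ordBall (hq : 1 < q) (hord : ∀ x : K, x ≠ 0 → ‖x‖ = q ^ (-(ord x)))
    (hϖ : ‖ϖ‖ = q⁻¹) (m n : ℤ) : ϖ ^ m • ordBall ord n = ordBall ord (n + m) := by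
  have hϖ0 : ϖ ≠ 0 := norm_ne_zero_iff.mp (by rw [hϖ]; positivity)
  rw [ordBall_eq_closedBall hq hord, ordBall_eq_closedBall hq hord,
    smul_closedBall' (zpow_ne_zero m hϖ0), smul_zero, norm_zpow, hϖ, inv_zpow',
    ← zpow_add₀ (by positivity), neg_add, add_comm]

theorem zpow_smul_evenOrdSet (hq : 1 < q) (hord : ∀ x : K, x ≠ 0 → ‖x‖ = q ^ (-(ord x)))
    (hϖ : ‖ϖ‖ = q⁻¹) {m : ℤ} (hm : Even m) : ϖ ^ m • evenOrdSet ord = evenOrdSet ord := by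
  have hϖ0 : ϖ ≠ 0 := norm_ne_zero_iff.mp (by rw [hϖ]; positivity)
  ext x
  rw [Set.mem_smul_set_iff_inv_smul_mem₀ (zpow_ne_zero m hϖ0), smul_eq_mul, ← zpow_neg]
  rcases eq_or_ne x 0 with rfl | hx
  · simp [evenOrdSet]
  · have hy : ϖ ^ (-m) * x ≠ 0 := mul_ne_zero (zpow_ne_zero _ hϖ0) hx
    simp only [evenOrdSet, Set.mem_union, Set.mem_ofPred_eq, Set.mem_singleton_iff, hx, hy,
      ord_zpow_mul hq hord hϖ (-m) hx, Int.even_add, even_neg, hm, true_iff, ne_eq,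
      not_false_eq_true, true_and, or_false]

theorem evenOrdSet_inter_ordBall_eq {n : ℤ} (hn : Even n) :
    evenOrdSet ord ∩ ordBall ord n =
      (ordBall ord n \ ordBall ord (n + 1)) ∪ evenOrdSet ord ∩ ordBall ord (n + 2) := by
  ext x
  rcases eq_or_ne x 0 with rfl | hx
  · simp [evenOrdSet, ordBall]
  · simp only [evenOrdSet, ordBall, Set.mem_union, Set.mem_inter_iff, Set.mem_sdiff,
      Set.mem_ofPred_eq, Set.mem_singleton_iff, hx, ne_eq, not_false_eq_true, true_and,
      or_false, false_or, Int.even_iff] at hn ⊢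
    omega

theorem evenOrdSet_inter_ordBall_sub_one {n : ℤ} (hn : Even n) :
    evenOrdSet ord ∩ ordBall ord (n - 1) = evenOrdSet ord ∩ ordBall ord n := by
  ext x
  rcases eq_or_ne x 0 with rfl | hx
  · simp [evenOrdSet, ordBall]
  · simp only [evenOrdSet, ordBall, Set.mem_union, Set.mem_inter_iff, Set.mem_ofPred_eq,
      Set.mem_singleton_iff, hx, ne_eq, not_false_eq_true, true_and, or_false, false_or,
      Int.even_iff] at hn ⊢
    omega

variable [MeasurableSpace K] {μ : Measure K}

theorem measure_ordBall (hq : 1 < q) (hord : ∀ x : K, x ≠ 0 → ‖x‖ = q ^ (-(ord x)))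
    (hϖ : ‖ϖ‖ = q⁻¹) (hsmul : ∀ c : K, c ≠ 0 → ∀ s : Set K, μ (c • s) = ‖c‖₊ * μ s)
    (hμ : μ (ordBall ord 0) = 1) (n : ℤ) : μ (ordBall ord n) = ENNReal.ofReal (q ^ (-n)) := by
  have hϖ0 : ϖ ≠ 0 := norm_ne_zero_iff.mp (by rw [hϖ]; positivity)
  rw [← zero_add n, ← zpow_smul_ordBall hq hord hϖ, hsmul _ (zpow_ne_zero n hϖ0), hμ, mul_one,
    ← enorm_eq_nnnorm, ← ofReal_norm, norm_zpow, hϖ, inv_zpow', zero_add]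

theorem measureReal_evenOrdSet_inter_ordBall [OpensMeasurableSpace K] (hq : 1 < q)
    (hord : ∀ x : K, x ≠ 0 → ‖x‖ = q ^ (-(ord x))) (hϖ : ‖ϖ‖ = q⁻¹)
    (hsmul : ∀ c : K, c ≠ 0 → ∀ s : Set K, μ (c • s) = ‖c‖₊ * μ s)
    (hμ : μ (ordBall ord 0) = 1) {n : ℤ} (hn : Even n) :
    μ.real (evenOrdSet ord ∩ ordBall ord n) = q ^ (-n) / (1 + q⁻¹) := by
  have hϖ0 : ϖ ≠ 0 := norm_ne_zero_iff.mp (by rw [hϖ]; positivity)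
  have hq0 : q ≠ 0 := by positivity
  have hfin : ∀ m, μ (ordBall ord m) ≠ ⊤ := fun m ↦ by
    rw [measure_ordBall hq hord hϖ hsmul hμ]; exact ENNReal.ofReal_ne_top
  have hmeas : ∀ m, MeasurableSet (ordBall ord m) := fun m ↦ by
    rw [ordBall_eq_closedBall hq hord]; exact measurableSet_closedBall
  have hreal : ∀ m, μ.real (ordBall ord m) = q ^ (-m) := fun m ↦ by
    rw [measureReal_def, measure_ordBall hq hord hϖ hsmul hμ, ENNReal.toReal_ofReal
      (by positivity)]
  set a := μ.real (evenOrdSet ord ∩ ordBall ord n)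
  have hshell : μ.real (ordBall ord n \ ordBall ord (n + 1)) = q ^ (-n) - q ^ (-n) * q⁻¹ := by
    rw [measureReal_sdiff (ordBall_anti (by omega)) (hmeas _) (hfin _), hreal, hreal, neg_add,
      zpow_add₀ hq0, zpow_neg_one]
  have hscale : μ.real (evenOrdSet ord ∩ ordBall ord (n + 2)) = q⁻¹ ^ 2 * a := by
    rw [← zpow_smul_ordBall hq hord hϖ, ← zpow_smul_evenOrdSet hq hord hϖ even_two,
      ← Set.smul_set_inter₀ (zpow_ne_zero _ hϖ0), measureReal_def, hsmul _ (zpow_ne_zero _ hϖ0),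
      ENNReal.toReal_mul, ENNReal.coe_toReal, coe_nnnorm, norm_zpow, hϖ]
    rfl
  have hsplit : a = (q ^ (-n) - q ^ (-n) * q⁻¹) + q⁻¹ ^ 2 * a := by
    have hdisj : Disjoint (ordBall ord n \ ordBall ord (n + 1))
        (evenOrdSet ord ∩ ordBall ord (n + 2)) :=
      Set.disjoint_sdiff_left.mono_right (Set.inter_subset_right.trans (ordBall_anti (by omega)))
    rw [← hshell, ← hscale, ← measureReal_union' hdisj ((hmeas _).diff (hmeas _))
      (measure_ne_top_of_subset Set.sdiff_subset (hfin _))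
      (measure_ne_top_of_subset Set.inter_subset_right (hfin _)),
      ← evenOrdSet_inter_ordBall_eq hn]
  have hq1 : 1 - q⁻¹ ≠ 0 := sub_ne_zero.mpr (inv_lt_one_of_one_lt₀ hq).ne'
  rw [eq_div_iff (by positivity)]
  refine sub_eq_zero.mp ((mul_eq_zero.mp ?_).resolve_right hq1)
  linear_combination hsplit

end

theorem stmt_1_general (K : Type*) [NormedField K]
    [MeasurableSpace K] [BorelSpace K]
    (μ : Measure K)
    (q : ℕ) (hq : 1 < q)
    (ord : K → ℤ)
    (hord : ∀ x : K, x ≠ 0 → ‖x‖ = (q : ℝ) ^ (-(ord x)))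
    (piK : K) (hpi : ‖piK‖ = (q : ℝ)⁻¹)
    (hμR : μ {x : K | ‖x‖ ≤ 1} = 1)
    (hsmul : ∀ c : K, c ≠ 0 → ∀ s : Set K, μ (c • s) = (‖c‖₊ : ENNReal) * μ s)
    (X : Set K) (hX : X = {x : K | x ≠ 0 ∧ Even (ord x)} ∪ {0}) :
    Tendsto (fun k : ℕ =>
        (q : ℝ) ^ (2 * (k : ℤ)) *
          (μ (X ∩ {x : K | x = 0 ∨ (2 * (k : ℤ)) ≤ ord x})).toReal)
      atTop (𝓝 ((1 + (q : ℝ)⁻¹)⁻¹)) ∧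
    Tendsto (fun k : ℕ =>
        (q : ℝ) ^ (2 * (k : ℤ) - 1) *
          (μ (X ∩ {x : K | x = 0 ∨ (2 * (k : ℤ) - 1) ≤ ord x})).toReal)
      atTop (𝓝 ((1 + (q : ℝ))⁻¹)) ∧
    (1 + (q : ℝ)⁻¹)⁻¹ ≠ (1 + (q : ℝ))⁻¹ := by
  subst hX
  have hq' : (1 : ℝ) < q := by exact_mod_cast hq
  have hq0 : (q : ℝ) ≠ 0 := by positivity
  have hμ : μ (ordBall ord 0) = 1 := by
    rw [ordBall_eq_closedBall hq' hord, neg_zero, zpow_zero, ← hμR]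
    congr 1
    ext x
    exact mem_closedBall_zero_iff
  have hmeas (k : ℕ) := measureReal_evenOrdSet_inter_ordBall hq' hord hpi hsmul hμ
    (even_two_mul (k : ℤ))
  refine ⟨tendsto_const_nhds.congr fun k ↦ ?_, tendsto_const_nhds.congr fun k ↦ ?_, ?_⟩
  · change _ = _ * μ.real (evenOrdSet ord ∩ ordBall ord (2 * k))
    rw [hmeas k, mul_div_assoc', ← zpow_add₀ hq0, add_neg_cancel, zpow_zero, one_div]
  · change _ = _ * μ.real (evenOrdSet ord ∩ ordBall ord (2 * k - 1))
    rw [evenOrdSet_inter_ordBall_sub_one (even_two_mul _), hmeas k, zpow_sub₀ hq0, zpow_neg]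
    field_simp
    ring
  · intro h
    linarith [inv_injective h, inv_lt_one_of_one_lt₀ hq']

/-- the renormalized volumes of `X = {x : ord x even} ∪ {0}` in the balls
`B(0,ℓ)` have different limits along even and odd `ℓ`. -/
theorem stmt_1 {p : ℕ} [Fact (Nat.Prime p)] (K : Type*) [NormedField K]
    [Algebra ℚ_[p] K] [FiniteDimensional ℚ_[p] K] [IsUltrametricDist K]
    (hext : ∀ x : ℚ_[p], ‖algebraMap ℚ_[p] K x‖ = ‖x‖)
    [MeasurableSpace K] [BorelSpace K]
    (μ : Measure K) [μ.IsAddHaarMeasure]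
    (q : ℕ) (hq : 1 < q)
    (ord : K → ℤ)
    (hord : ∀ x : K, x ≠ 0 → ‖x‖ = (q : ℝ) ^ (-(ord x)))
    (piK : K) (hpi : ‖piK‖ = (q : ℝ)⁻¹)
    (hμR : μ {x : K | ‖x‖ ≤ 1} = 1)
    (hsmul : ∀ c : K, c ≠ 0 → ∀ s : Set K, μ (c • s) = (‖c‖₊ : ENNReal) * μ s)
    (X : Set K) (hX : X = {x : K | x ≠ 0 ∧ Even (ord x)} ∪ {0}) :
    Tendsto (fun k : ℕ =>
        (q : ℝ) ^ (2 * (k : ℤ)) *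
          (μ (X ∩ {x : K | x = 0 ∨ (2 * (k : ℤ)) ≤ ord x})).toReal)
      atTop (𝓝 ((1 + (q : ℝ)⁻¹)⁻¹)) ∧
    Tendsto (fun k : ℕ =>
        (q : ℝ) ^ (2 * (k : ℤ) - 1) *
          (μ (X ∩ {x : K | x = 0 ∨ (2 * (k : ℤ) - 1) ≤ ord x})).toReal)
      atTop (𝓝 ((1 + (q : ℝ))⁻¹)) ∧
    (1 + (q : ℝ)⁻¹)⁻¹ ≠ (1 + (q : ℝ))⁻¹ :=
  stmt_1_general K μ q hq ord hord piK hpi hμR hsmul X hX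
end

section
/- Let K be a finite extension of Q_p and let g : R → K^n be a nonconstant map given by power series converging on the valuation ring R. Then the limit as r → 0 of the secant lines ℓ_r through g(0) and g(r) exists in P^{n−1}(K), the limit of the tangent lines ℓ'_r = {g(r) + λ·g'(r) : λ ∈ K} exists, and the two limits coincide (p-adic Whitney lemma). -/
/-!
In an ultrametric space the sum of a series differs from any one of its terms by at most the
largest of the remaining terms. A power series `∑ rʲ cⱼ` converging on the closed unit ball has
bounded coefficients (it converges at `r = 1`), so if `c_k` is its first possibly nonzero
coefficient, every term other than `rᵏ c_k` is `O(‖r‖ᵏ⁺¹)` and `r⁻ᵏ • ∑ rʲ cⱼ → c_k`.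
The secant direction is the case of `g - g 0` with leading index `k`, the tangent direction that
of the termwise derivative `g'`, whose leading coefficient `k • a k` is nonzero in
characteristic zero.
-/

open Filter Topology

theorem IsUltrametricDist.norm_sub_le_of_hasSum {E : Type*} [NormedAddCommGroup E]
    [IsUltrametricDist E] {f : ℕ → E} {s : E} (hf : HasSum f s) (k : ℕ) {B : ℝ} (hB : 0 ≤ B)
    (h : ∀ j ≠ k, ‖f j‖ ≤ B) : ‖s - f k‖ ≤ B := by
  have hupdate : HasSum (Function.update f k 0) (s - f k) := by
    simpa [sub_eq_neg_add] using hf.update k 0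
  rw [← hupdate.tsum_eq]
  refine norm_tsum_le_of_forall_le_of_nonneg hB fun j => ?_
  rcases eq_or_ne j k with rfl | hj
  · simpa using hB
  · simpa [Function.update_of_ne hj] using h j hj

theorem HasSum.pow_smul_update_zero {K E : Type*} [Monoid K] [AddCommGroup E]
    [TopologicalSpace E] [IsTopologicalAddGroup E] [DistribMulAction K E] {a : ℕ → E} {r : K}
    {s : E} (hs : HasSum (fun j => r ^ j • a j) s) :
    HasSum (fun j => r ^ j • Function.update a 0 0 j) (s - a 0) := by
  have hterms : (fun j => r ^ j • Function.update a 0 0 j) =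
      Function.update (fun j => r ^ j • a j) 0 0 := by
    funext j
    rcases eq_or_ne j 0 with rfl | hj <;> simp [Function.update_of_ne, *]
  simpa [hterms, sub_eq_neg_add] using hs.update 0 0

section PowerSeries

variable {K E : Type*} [NormedField K] [NormedAddCommGroup E] [NormedSpace K E]
  [IsUltrametricDist E]

theorem norm_hasSum_pow_smul_sub_le {c : ℕ → E} {r : K} {s : E} {C : ℝ} {k : ℕ}
    (hs : HasSum (fun j => r ^ j • c j) s) (hr : ‖r‖ ≤ 1) (hC : ∀ j, ‖c j‖ ≤ C)
    (hlow : ∀ j < k, c j = 0) : ‖s - r ^ k • c k‖ ≤ C * ‖r‖ ^ (k + 1) := by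
  have hC0 : 0 ≤ C := (norm_nonneg _).trans (hC 0)
  refine IsUltrametricDist.norm_sub_le_of_hasSum hs k (by positivity) fun j hj => ?_
  rcases hj.lt_or_gt with hjk | hkj
  · rw [hlow j hjk, smul_zero, norm_zero]
    positivity
  · calc ‖r ^ j • c j‖ = ‖r‖ ^ j * ‖c j‖ := by rw [norm_smul, norm_pow]
      _ ≤ ‖r‖ ^ (k + 1) * C :=
        mul_le_mul (pow_le_pow_of_le_one (norm_nonneg r) hr hkj) (hC j) (norm_nonneg _)
          (by positivity)
      _ = C * ‖r‖ ^ (k + 1) := mul_comm _ _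

theorem tendsto_inv_pow_smul_of_hasSum {c : ℕ → E} {F : K → E} {k : ℕ}
    (hF : ∀ r : K, ‖r‖ ≤ 1 → HasSum (fun j => r ^ j • c j) (F r))
    (hlow : ∀ j < k, c j = 0) :
    Tendsto (fun r => (r ^ k)⁻¹ • F r) (𝓝[{r : K | r ≠ 0 ∧ ‖r‖ ≤ 1}] 0) (𝓝 (c k)) := by
  obtain ⟨C, hC⟩ : ∃ C, ∀ j, ‖c j‖ ≤ C := by
    have hsum : Summable c := by simpa using (hF 1 norm_one.le).summable
    obtain ⟨C, hC⟩ := hsum.tendsto_atTop_zero.norm.bddAbove_range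
    exact ⟨C, fun j => hC (Set.mem_range_self j)⟩
  have hbound : ∀ r ∈ {r : K | r ≠ 0 ∧ ‖r‖ ≤ 1}, ‖(r ^ k)⁻¹ • F r - c k‖ ≤ C * ‖r‖ := by
    rintro r ⟨hr0, hr1⟩
    have hrk : r ^ k ≠ 0 := pow_ne_zero k hr0
    calc ‖(r ^ k)⁻¹ • F r - c k‖ = (‖r‖ ^ k)⁻¹ * ‖F r - r ^ k • c k‖ := by
          rw [← norm_pow, ← norm_inv, ← norm_smul, smul_sub, smul_smul, inv_mul_cancel₀ hrk,
            one_smul]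
      _ ≤ (‖r‖ ^ k)⁻¹ * (C * ‖r‖ ^ (k + 1)) := by
          gcongr
          exact norm_hasSum_pow_smul_sub_le (hF r hr1) hr1 hC hlow
      _ = C * ‖r‖ := by
          field_simp [norm_ne_zero_iff.2 hr0]
          ring
  have hlin : Tendsto (fun r : K => C * ‖r‖) (𝓝[{r : K | r ≠ 0 ∧ ‖r‖ ≤ 1}] 0) (𝓝 0) := by
    simpa using ((continuous_norm.tendsto (0 : K)).const_mul C).mono_left nhdsWithin_le_nhds
  rw [tendsto_iff_norm_sub_tendsto_zero]
  exact squeeze_zero' (Eventually.of_forall fun r => norm_nonneg _)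
    (eventually_mem_nhdsWithin.mono hbound) hlin

end PowerSeries

theorem stmt_8_general {p : ℕ} [Fact (Nat.Prime p)] (K : Type*) [NormedField K]
    [Algebra ℚ_[p] K] [IsUltrametricDist K]
    (n : ℕ) (a : ℕ → Fin n → K) (g g' : K → Fin n → K)
    (hg : ∀ r : K, ‖r‖ ≤ 1 → HasSum (fun j : ℕ => r ^ j • a j) (g r))
    (hg' : ∀ r : K, ‖r‖ ≤ 1 →
      HasSum (fun j : ℕ => ((j : K) + 1) • (r ^ j • a (j + 1))) (g' r))
    (k : ℕ) (hk1 : 1 ≤ k) (hak : a k ≠ 0)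
    (hmin : ∀ j : ℕ, 0 < j → j < k → a j = 0) :
    ∃ v : Fin n → K, v ≠ 0 ∧
      Tendsto (fun r : K => (r ^ k)⁻¹ • (g r - g 0))
        (𝓝[{r : K | r ≠ 0 ∧ ‖r‖ ≤ 1}] 0) (𝓝 v) ∧
      Tendsto (fun r : K => ((k : K) * r ^ (k - 1))⁻¹ • g' r)
        (𝓝[{r : K | r ≠ 0 ∧ ‖r‖ ≤ 1}] 0) (𝓝 v) := by
  have : CharZero K := charZero_of_injective_algebraMap (algebraMap ℚ_[p] K).injective
  obtain ⟨m, rfl⟩ : ∃ m, k = m + 1 := ⟨k - 1, by omega⟩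
  have hg0 : g 0 = a 0 := by
    simpa using (hg 0 (by simp)).unique (hasSum_single 0 fun j hj => by simp [hj])
  have hsecant : ∀ r : K, ‖r‖ ≤ 1 →
      HasSum (fun j : ℕ => r ^ j • Function.update a 0 0 j) (g r - g 0) := by
    intro r hr
    simpa only [hg0] using (hg r hr).pow_smul_update_zero
  have htangent : ∀ r : K, ‖r‖ ≤ 1 →
      HasSum (fun j : ℕ => r ^ j • (((j : K) + 1) • a (j + 1))) (g' r) := by
    intro r hr
    simpa only [smul_comm (r ^ _)] using hg' r hr
  refine ⟨a (m + 1), hak, ?_, ?_⟩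
  · have hlim := tendsto_inv_pow_smul_of_hasSum (k := m + 1) hsecant fun j hj => by
      rcases eq_or_ne j 0 with rfl | hj0
      · simp
      · simp [Function.update_of_ne hj0, hmin j (Nat.pos_of_ne_zero hj0) hj]
    rwa [Function.update_of_ne m.succ_ne_zero] at hlim
  · have hm : ((m : K) + 1) ≠ 0 := by exact_mod_cast Nat.succ_ne_zero m
    have hlim := (tendsto_inv_pow_smul_of_hasSum (k := m) htangent fun j hj => by
      simp [hmin (j + 1) j.succ_pos (by omega)]).const_smul ((m : K) + 1)⁻¹
    simpa [smul_smul, mul_inv, inv_mul_cancel₀ hm, mul_comm] using hlim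

/-- p-adic Whitney lemma: for a nonconstant power-series map `g : R → K^n`
with derivative `g'`, the directions of the secant lines through `g 0` and `g r`
and of the tangent lines at `g r` both converge as `r → 0`, to a common nonzero
vector `v` (so the limit secant and tangent lines both exist and coincide:
they are the line spanned by `v`). -/
theorem stmt_8 {p : ℕ} [Fact (Nat.Prime p)] (K : Type*) [NormedField K]
    [Algebra ℚ_[p] K] [FiniteDimensional ℚ_[p] K] [IsUltrametricDist K]
    (hext : ∀ x : ℚ_[p], ‖algebraMap ℚ_[p] K x‖ = ‖x‖)
    (n : ℕ) (a : ℕ → Fin n → K) (g g' : K → Fin n → K)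
    (hg : ∀ r : K, ‖r‖ ≤ 1 → HasSum (fun j : ℕ => r ^ j • a j) (g r))
    (hg' : ∀ r : K, ‖r‖ ≤ 1 →
      HasSum (fun j : ℕ => ((j : K) + 1) • (r ^ j • a (j + 1))) (g' r))
    (k : ℕ) (hk1 : 1 ≤ k) (hak : a k ≠ 0)
    (hmin : ∀ j : ℕ, 0 < j → j < k → a j = 0) :
    ∃ v : Fin n → K, v ≠ 0 ∧
      Tendsto (fun r : K => (r ^ k)⁻¹ • (g r - g 0))
        (𝓝[{r : K | r ≠ 0 ∧ ‖r‖ ≤ 1}] 0) (𝓝 v) ∧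
      Tendsto (fun r : K => ((k : K) * r ^ (k - 1))⁻¹ • g' r)
        (𝓝[{r : K | r ≠ 0 ∧ ‖r‖ ≤ 1}] 0) (𝓝 v) :=
  stmt_8_general (p := p) K n a g g' hg hg' k hk1 hak hmin
end

section
/- Let K be a finite extension of Q_p, let Λ' ⊆ Λ be subgroups of K^× with Λ' of finite index and open in K^×, let C ⊆ K^n be a Λ-cone with origin 0 (i.e., Λ·C ⊆ C). Then C_0^{Λ'}(C) = C_0^{Λ}(C), and if moreover C is closed, both equal C. -/
open Filter Topology

/-- `ord (w) > i` for a vector `w ∈ K^n`, where `ord` on `K^n` is the minimum of the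
coordinate valuations (and `ord 0 = ∞`). -/
def ordGT {K : Type*} [Zero K] (ord : K → ℤ) {n : ℕ} (w : Fin n → K) (i : ℤ) : Prop :=
  ∀ j, w j = 0 ∨ i < ord (w j)

/-- The tangent `Λ`-cone of `X` at `x`. -/
def tangentConeL {K : Type*} [Field K] (ord : K → ℤ) {n : ℕ} (Lam : Subgroup Kˣ)
    (X : Set (Fin n → K)) (x : Fin n → K) : Set (Fin n → K) :=
  {u | ∀ i : ℤ, 0 < i → ∃ z ∈ X, ∃ l : Kˣ, l ∈ Lam ∧
    ordGT ord (z - x) i ∧ ordGT ord ((l : K) • (z - x) - u) i}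

/-- if `C` is a `Λ`-cone with origin `0` and `Λ' ⊆ Λ` is open of finite
index in `K^×`, then `C_0^{Λ'}(C) = C_0^Λ(C)`, and both equal `C` when `C` is closed. -/
theorem stmt_16 {p : ℕ} [Fact (Nat.Prime p)] (K : Type*) [NormedField K]
    [Algebra ℚ_[p] K] [FiniteDimensional ℚ_[p] K] [IsUltrametricDist K]
    (hext : ∀ x : ℚ_[p], ‖algebraMap ℚ_[p] K x‖ = ‖x‖)
    (q : ℕ) (hq : 1 < q)
    (ord : K → ℤ)
    (hord : ∀ x : K, x ≠ 0 → ‖x‖ = (q : ℝ) ^ (-(ord x)))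
    (piK : Kˣ) (hpi : ‖(piK : K)‖ = (q : ℝ)⁻¹)
    (n : ℕ) (Lam Lam' : Subgroup Kˣ) (hsub : Lam' ≤ Lam)
    (hopen : IsOpen (Lam' : Set Kˣ)) (hfin : Lam'.FiniteIndex)
    (C : Set (Fin n → K))
    (hC : ∀ l ∈ Lam, ∀ c ∈ C, (l : K) • c ∈ C) :
    tangentConeL ord Lam' C 0 = tangentConeL ord Lam C 0 ∧
      (IsClosed C → tangentConeL ord Lam C 0 = C) := by
  have hq1 : (1:ℝ) < q := by exact_mod_cast hq
  have hq0 : (0:ℝ) < q := lt_trans one_pos hq1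
  have hordeq : ∀ x : K, x ≠ 0 → ∀ t : ℤ, ‖x‖ = (q:ℝ) ^ (-t) → ord x = t := by
    intro x hx t h
    have := (hord x hx).symm.trans h
    have h2 := (zpow_right_strictMono₀ hq1).injective this
    omega
  have hordmul : ∀ x y : K, x ≠ 0 → y ≠ 0 → ord (x * y) = ord x + ord y := by
    intro x y hx hy
    refine hordeq _ (mul_ne_zero hx hy) _ ?_
    rw [norm_mul, hord x hx, hord y hy, ← zpow_add₀ (ne_of_gt hq0)]
    ring_nf
  have hpi1 : ord (piK : K) = 1 := by
    refine hordeq _ (Units.ne_zero piK) 1 ?_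
    rw [hpi, zpow_neg, zpow_one]
  have hpipow : ∀ t : ℕ, ord ((piK : K) ^ t) = t := by
    intro t
    induction t with
    | zero => simp; exact hordeq 1 one_ne_zero 0 (by simp)
    | succ t ih =>
      rw [pow_succ, hordmul _ _ (pow_ne_zero _ (Units.ne_zero piK)) (Units.ne_zero piK), ih, hpi1]
      push_cast; ring
  obtain ⟨m, hm0, hmL⟩ : ∃ m : ℕ, 0 < m ∧ piK ^ m ∈ Lam' :=
    ⟨Lam'.index, Nat.pos_of_ne_zero hfin.index_ne_zero, Subgroup.pow_index_mem _ _⟩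
  -- key: Lam-cone ⊆ Lam'-cone
  have key1 : tangentConeL ord Lam C 0 ⊆ tangentConeL ord Lam' C 0 := by
    intro u hu i hi
    obtain ⟨z, hz, l, hl, h1, h2⟩ := hu i hi
    set k : ℕ := (-(ord (l : K))).toNat with hk
    set a : Kˣ := piK ^ (m * k) with ha
    have haL' : a ∈ Lam' := by rw [ha, pow_mul]; exact pow_mem hmL k
    have horda : ord (a : K) = (m * k : ℕ) := by
      rw [ha, Units.val_pow_eq_pow_val]; exact hpipow (m * k)
    refine ⟨((a * l : Kˣ) : K) • z, hC (a * l) (mul_mem (hsub haL') hl) z hz,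
      a⁻¹, inv_mem haL', ?_, ?_⟩
    · intro j
      by_cases hzj : z j = 0
      · left; simp [hzj]
      · have h : i < ord (z j) := by
          rcases h1 j with h | h
          · exact absurd (by simpa using h) hzj
          · simpa using h
        right
        simp only [sub_zero, Pi.smul_apply, smul_eq_mul]
        rw [hordmul _ _ (Units.ne_zero _) hzj, Units.val_mul,
          hordmul _ _ (Units.ne_zero a) (Units.ne_zero l), horda]
        have h3 : (-(ord (l:K))) ≤ (k : ℤ) := Int.self_le_toNat _
        have h4 : (k : ℤ) ≤ (m * k : ℕ) := by
          have := Nat.le_mul_of_pos_left k hm0; exact_mod_cast this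
        omega
    · have : ((a⁻¹ : Kˣ) : K) • (((a * l : Kˣ) : K) • z) = (l : K) • z := by
        rw [smul_smul, ← Units.val_mul, inv_mul_cancel_left]
      rw [sub_zero, this]
      simpa only [sub_zero] using h2
  constructor
  · refine Set.Subset.antisymm ?_ key1
    intro u hu i hi
    obtain ⟨z, hz, l, hl, h1, h2⟩ := hu i hi
    exact ⟨z, hz, l, hsub hl, h1, h2⟩
  · intro hCl
    apply Set.Subset.antisymm
    · -- tangent cone ⊆ C, using closedness
      intro u hu
      rw [← hCl.closure_eq]
      rw [Metric.mem_closure_iff]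
      intro ε hε
      obtain ⟨N, hN⟩ := exists_pow_lt_of_lt_one hε
        (by rw [inv_lt_one_iff₀]; right; exact hq1 : (q:ℝ)⁻¹ < 1)
      obtain ⟨z, hz, l, hl, h1, h2⟩ := hu (N + 1) (by positivity)
      refine ⟨(l : K) • z, hC l hl z hz, ?_⟩
      by_cases hn : n = 0
      · subst hn
        have : u = (l:K) • z := by ext j; exact absurd j.2 (by omega)
        rw [this, dist_self]; exact hε
      · rw [dist_pi_lt_iff hε]
        intro j
        by_cases hne : ((l:K) • z - u) j = 0
        · have : ((l:K) • z) j = u j := by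
            have := sub_eq_zero.mp (by simpa using hne)
            simpa using this
          rw [this, dist_self]; exact hε
        · have h : (N:ℤ) + 1 < ord (((l:K) • z - u) j) := by
            rcases h2 j with h | h
            · exact absurd (by simpa using h) hne
            · simpa using h
          have : dist (u j) (((l:K) • z) j) = ‖((l:K) • z - u) j‖ := by
            rw [dist_eq_norm, ← norm_neg]; congr 1; simp [Pi.sub_apply]
          rw [this, hord _ hne]
          calc (q:ℝ) ^ (-(ord (((l:K) • z - u) j)))
              ≤ (q:ℝ) ^ (-((N:ℤ) + 1)) := zpow_le_zpow_right₀ (le_of_lt hq1) (by omega)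
            _ = ((q:ℝ)⁻¹) ^ (N + 1) := by
                rw [zpow_neg, show ((N:ℤ)+1) = ((N+1:ℕ):ℤ) by push_cast; ring,
                  zpow_natCast, inv_pow]
            _ ≤ ((q:ℝ)⁻¹) ^ N := pow_le_pow_of_le_one (by positivity) (by
                rw [inv_le_one₀ hq0]; exact le_of_lt hq1) (by omega)
            _ < ε := hN
    · -- C ⊆ tangent cone
      intro u hu i hi
      set k : ℕ := Finset.univ.sup (fun j => (i + 1 - ord (u j)).toNat) with hk
      set a : Kˣ := piK ^ (m * k) with ha
      have haL' : a ∈ Lam' := by rw [ha, pow_mul]; exact pow_mem hmL k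
      have horda : ord (a : K) = (m * k : ℕ) := by
        rw [ha, Units.val_pow_eq_pow_val]; exact hpipow (m * k)
      refine ⟨(a : K) • u, hC a (hsub haL') u hu, a⁻¹, Lam.inv_mem (hsub haL'), ?_, ?_⟩
      · intro j
        by_cases hj : u j = 0
        · left; simp [hj]
        · right
          simp only [sub_zero, Pi.smul_apply, smul_eq_mul]
          rw [hordmul _ _ (Units.ne_zero a) hj, horda]
          have h3 : (i + 1 - ord (u j)) ≤ ((i + 1 - ord (u j)).toNat : ℤ) := Int.self_le_toNat _
          have h4 : ((i + 1 - ord (u j)).toNat : ℤ) ≤ (k : ℤ) := by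
            have := Finset.le_sup (f := fun j => (i + 1 - ord (u j)).toNat)
              (Finset.mem_univ j)
            exact_mod_cast this
          have h5 : (k : ℤ) ≤ (m * k : ℕ) := by
            have := Nat.le_mul_of_pos_left k hm0; exact_mod_cast this
          omega
      · intro j
        left
        have : ((a⁻¹ : Kˣ) : K) • ((a : K) • u) = u := by
          rw [smul_smul, ← Units.val_mul, inv_mul_cancel, Units.val_one, one_smul]
        rw [sub_zero, this, sub_self]
        rfl
end

section
/- Let K be a finite extension of Q_p, Λ an open finite-index subgroup of K^×, and Y ⊆ K a finite union of sets of the form {t ∈ K : |α| □₁ |t−c| □₂ |β|, t−c ∈ λP_n} (cells), where □ᵢ is < or no condition. Then for every y ∈ K there exists γ ∈ ℕ such that Y ∩ B(y,γ) is a local Λ'-cone with origin y for Λ' = P_N, N the lcm of the occurring n's: that is, Y ∩ B(y,γ) = (y + C) ∩ B(y,γ) for some set C ⊆ K stable under multiplication by P_N. -/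
/-!
Near a point `y` each cell is of one of two kinds. If `y` is not the centre `c`, the cell is
locally constant at `y`: in an ultrametric field `‖t - c‖` is locally constant off `c`, and
`λ • P_n` is open in `K^×` because `P_n` is a neighbourhood of `1` (inverse function theorem
for `w ↦ w ^ n`, whose derivative `n` at `1` is nonzero in characteristic zero). If `y = c`,
the norm conditions are eventually decided, leaving either nothing or `c + λ • P_n`. Both
are local `P_n`-cones, hence local `P_N`-cones for `n ∣ N`, and a finite union of local cones
at `y` is one.
-/

open Filter Topology
open scoped Pointwise

section NthPowers

variable {G₀ : Type*} [CommGroupWithZero G₀] {m n : ℕ} {a b u l : G₀}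

def nthPowers (G₀ : Type*) [CommGroupWithZero G₀] (n : ℕ) : Set G₀ :=
  {x | ∃ w, w ≠ 0 ∧ w ^ n = x}

lemma mul_mem_nthPowers (ha : a ∈ nthPowers G₀ n) (hb : b ∈ nthPowers G₀ n) :
    a * b ∈ nthPowers G₀ n := by
  obtain ⟨v, hv, rfl⟩ := ha
  obtain ⟨w, hw, rfl⟩ := hb
  exact ⟨v * w, mul_ne_zero hv hw, mul_pow v w n⟩

lemma inv_mem_nthPowers (ha : a ∈ nthPowers G₀ n) : a⁻¹ ∈ nthPowers G₀ n := by
  obtain ⟨v, hv, rfl⟩ := ha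
  exact ⟨v⁻¹, inv_ne_zero hv, inv_pow v n⟩

lemma nthPowers_subset_of_dvd (h : n ∣ m) : nthPowers G₀ m ⊆ nthPowers G₀ n := by
  rintro _ ⟨w, hw, rfl⟩
  obtain ⟨k, rfl⟩ := h
  exact ⟨w ^ k, pow_ne_zero k hw, by rw [← pow_mul, mul_comm]⟩

lemma mul_mem_smul_nthPowers_iff (hu : u ∈ nthPowers G₀ n) :
    a * u ∈ l • nthPowers G₀ n ↔ a ∈ l • nthPowers G₀ n := by
  have key : ∀ {a u}, u ∈ nthPowers G₀ n → a ∈ l • nthPowers G₀ n →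
      a * u ∈ l • nthPowers G₀ n := by
    rintro a u hu ⟨x, hx, rfl⟩
    exact ⟨x * u, mul_mem_nthPowers hx hu, (smul_eq_mul l _).trans (mul_assoc l x u).symm⟩
  refine ⟨fun h => ?_, key hu⟩
  have hu0 : u ≠ 0 := by
    obtain ⟨w, hw, rfl⟩ := hu
    exact pow_ne_zero n hw
  simpa [mul_assoc, mul_inv_cancel₀ hu0] using key (inv_mem_nthPowers hu) h

end NthPowers

lemma eventually_norm_sub_eq {E : Type*} [NormedAddCommGroup E] [IsUltrametricDist E]
    {y c : E} (hyc : y ≠ c) : ∀ᶠ t in 𝓝 y, ‖t - c‖ = ‖y - c‖ := by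
  have hsphere := (IsUltrametricDist.isOpen_sphere (x := c) (dist_ne_zero.2 hyc)).mem_nhds
    (Metric.mem_sphere.2 rfl)
  filter_upwards [hsphere] with t ht
  simpa [dist_eq_norm] using ht

section NthPowersNhds

variable {K : Type*} [NontriviallyNormedField K] [CompleteSpace K] {n : ℕ}

lemma nthPowers_mem_nhds_one (hn : (n : K) ≠ 0) : nthPowers K n ∈ 𝓝 1 := by
  have hderiv : HasStrictDerivAt (fun w : K => w ^ n) (n * 1 ^ (n - 1)) 1 :=
    hasStrictDerivAt_pow n 1
  rw [one_pow, mul_one] at hderiv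
  have himage := image_mem_map (m := fun w : K => w ^ n) (isOpen_ne.mem_nhds one_ne_zero)
  rw [hderiv.map_nhds_eq hn, one_pow] at himage
  refine mem_of_superset himage ?_
  rintro _ ⟨w, hw, rfl⟩
  exact ⟨w, hw, rfl⟩

lemma eventually_mem_smul_nthPowers_iff (hn : (n : K) ≠ 0) (l : K) {y : K} (hy : y ≠ 0) :
    ∀ᶠ t in 𝓝 y, t ∈ l • nthPowers K n ↔ y ∈ l • nthPowers K n := by
  have hquot : Tendsto (fun t => y⁻¹ * t) (𝓝 y) (𝓝 1) := by
    simpa [inv_mul_cancel₀ hy] using (continuous_const_mul y⁻¹).tendsto y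
  filter_upwards [hquot (nthPowers_mem_nhds_one hn)] with t ht
  simpa only [mul_inv_cancel_left₀ hy] using mul_mem_smul_nthPowers_iff (a := y) (l := l) ht

end NthPowersNhds

section LocalCone

variable {K : Type*} [Ring K] [TopologicalSpace K] {Λ Λ' Y : Set K} {y : K}

/-- The paper's `(y + C) ∩ B(y, γ)` for all large `γ`, phrased with `𝓝 y`. -/
def IsLocalConeAt (Λ Y : Set K) (y : K) : Prop :=
  ∃ C : Set K, (∀ u ∈ Λ, ∀ t ∈ C, u * t ∈ C) ∧ ∀ᶠ t in 𝓝 y, t ∈ Y ↔ t - y ∈ C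

lemma IsLocalConeAt.mono (h : IsLocalConeAt Λ Y y) (hΛ : Λ' ⊆ Λ) : IsLocalConeAt Λ' Y y :=
  let ⟨C, hC, hY⟩ := h
  ⟨C, fun u hu => hC u (hΛ hu), hY⟩

lemma isLocalConeAt_of_eventually_iff (h : ∀ᶠ t in 𝓝 y, t ∈ Y ↔ y ∈ Y) : IsLocalConeAt Λ Y y :=
  ⟨{_t | y ∈ Y}, fun _ _ _ => id, h⟩

lemma IsLocalConeAt.iUnion {ι : Type*} [Finite ι] {Y : ι → Set K}
    (h : ∀ i, IsLocalConeAt Λ (Y i) y) : IsLocalConeAt Λ (⋃ i, Y i) y := by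
  choose C hC hY using h
  refine ⟨⋃ i, C i, ?_, ?_⟩
  · simp only [Set.mem_iUnion]
    rintro u hu t ⟨i, ht⟩
    exact ⟨i, hC i u hu t ht⟩
  · filter_upwards [eventually_all.2 hY] with t ht
    simp only [Set.mem_iUnion, ht]

end LocalCone

section Cell

variable {K : Type*} [NormedField K] {lower upper : Bool} {α β c l : K} {n : ℕ}

def cell (lower upper : Bool) (α β c l : K) (n : ℕ) : Set K :=
  {t | (lower = true → ‖α‖ < ‖t - c‖) ∧ (upper = true → ‖t - c‖ < ‖β‖) ∧
    t - c ∈ l • nthPowers K n}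

lemma cell_isLocalConeAt_center (hα : α ≠ 0) (hβ : β ≠ 0) :
    IsLocalConeAt (nthPowers K n) (cell lower upper α β c l n) c := by
  have hnear : ∀ {r : ℝ}, 0 < r → ∀ᶠ t in 𝓝 c, ‖t - c‖ < r := fun hr => by
    filter_upwards [Metric.ball_mem_nhds c hr] with t ht
    rwa [Metric.mem_ball, dist_eq_norm] at ht
  cases lower
  · refine ⟨l • nthPowers K n, fun u hu t ht => ?_, ?_⟩
    · rw [mul_comm]
      exact (mul_mem_smul_nthPowers_iff hu).2 ht
    · filter_upwards [hnear (norm_pos_iff.2 hβ)] with t ht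
      simp [cell, ht]
  · apply isLocalConeAt_of_eventually_iff
    filter_upwards [hnear (norm_pos_iff.2 hα)] with t ht
    simp [cell, ht.not_gt]

end Cell

section CellNhds

variable {K : Type*} [NontriviallyNormedField K] [CompleteSpace K] [IsUltrametricDist K]
  {lower upper : Bool} {α β c l y : K} {n : ℕ} {Λ : Set K}

lemma cell_isLocalConeAt_of_ne (hn : (n : K) ≠ 0) (hyc : y ≠ c) :
    IsLocalConeAt Λ (cell lower upper α β c l n) y := by
  have hmem := ((continuous_sub_right c).tendsto y).eventually
    (eventually_mem_smul_nthPowers_iff hn l (sub_ne_zero.2 hyc))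
  apply isLocalConeAt_of_eventually_iff
  filter_upwards [eventually_norm_sub_eq hyc, hmem] with t hnorm hmem
  simp only [cell, Set.mem_ofPred_eq, hnorm, hmem]

lemma cell_isLocalConeAt (hn : (n : K) ≠ 0) (hα : α ≠ 0) (hβ : β ≠ 0) (y : K) :
    IsLocalConeAt (nthPowers K n) (cell lower upper α β c l n) y := by
  obtain rfl | hyc := eq_or_ne y c
  · exact cell_isLocalConeAt_center hα hβ
  · exact cell_isLocalConeAt_of_ne hn hyc

end CellNhds

lemma exists_ordBall_subset {E : Type*} [NormedAddCommGroup E] {q : ℕ} (hq : 1 < q)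
    {ord : E → ℤ} (hord : ∀ x : E, x ≠ 0 → ‖x‖ = (q : ℝ) ^ (-(ord x))) {s : Set E} {y : E}
    (hs : s ∈ 𝓝 y) : ∃ γ : ℕ, {t | t = y ∨ (γ : ℤ) ≤ ord (t - y)} ⊆ s := by
  have hq' : (1 : ℝ) < q := by exact_mod_cast hq
  obtain ⟨ε, hε, hball⟩ := Metric.mem_nhds_iff.1 hs
  obtain ⟨γ, hγ⟩ := exists_pow_lt_of_lt_one hε (inv_lt_one_of_one_lt₀ hq')
  refine ⟨γ, fun t ht => ?_⟩
  obtain rfl | hty := eq_or_ne t y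
  · exact mem_of_mem_nhds hs
  apply hball
  rw [Metric.mem_ball, dist_eq_norm, hord _ (sub_ne_zero.2 hty)]
  calc (q : ℝ) ^ (-ord (t - y)) ≤ (q : ℝ) ^ (-(γ : ℤ)) :=
        zpow_le_zpow_right₀ hq'.le (neg_le_neg (ht.resolve_left hty))
    _ = (q : ℝ)⁻¹ ^ γ := by rw [zpow_neg, zpow_natCast, inv_pow]
    _ < ε := hγ

lemma IsLocalConeAt.exists_inter_ordBall_eq {K : Type*} [NormedRing K] {q : ℕ} (hq : 1 < q)
    {ord : K → ℤ} (hord : ∀ x : K, x ≠ 0 → ‖x‖ = (q : ℝ) ^ (-(ord x))) {Λ Y : Set K} {y : K}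
    (h : IsLocalConeAt Λ Y y) :
    ∃ γ : ℕ, ∃ C : Set K, (∀ u ∈ Λ, ∀ t ∈ C, u * t ∈ C) ∧
      Y ∩ {t | t = y ∨ (γ : ℤ) ≤ ord (t - y)} =
        ((fun t => y + t) '' C) ∩ {t | t = y ∨ (γ : ℤ) ≤ ord (t - y)} := by
  obtain ⟨C, hC, hYC⟩ := h
  obtain ⟨γ, hγ⟩ := exists_ordBall_subset hq hord hYC
  refine ⟨γ, C, hC, Set.ext fun t => and_congr_left fun ht => ?_⟩
  have hiff : t ∈ Y ↔ t - y ∈ C := hγ ht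
  rw [hiff, Set.image_add_left, Set.mem_preimage, neg_add_eq_sub]

lemma completeSpace_of_norm_algebraMap {𝕜 K : Type*} [NontriviallyNormedField 𝕜]
    [CompleteSpace 𝕜] [NormedField K] [Algebra 𝕜 K] [FiniteDimensional 𝕜 K]
    (h : ∀ x : 𝕜, ‖algebraMap 𝕜 K x‖ = ‖x‖) : CompleteSpace K :=
  letI : NormedSpace 𝕜 K := ⟨fun x k => by rw [Algebra.smul_def, norm_mul, h]⟩
  FiniteDimensional.complete 𝕜 K

/-- a finite union `Y ⊆ K` of cells
`{t : |α| □₁ |t-c| □₂ |t-c| ∈ λ•P_n}` is, around every point `y ∈ K`, a local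
`P_N`-cone with origin `y`, where `N` is the lcm of the occurring `n`'s:
`Y ∩ B(y,γ) = (y + C) ∩ B(y,γ)` for some set `C` stable under multiplication
by nonzero `N`-th powers. -/
theorem stmt_17 {p : ℕ} [Fact (Nat.Prime p)] (K : Type*) [NormedField K]
    [Algebra ℚ_[p] K] [FiniteDimensional ℚ_[p] K] [IsUltrametricDist K]
    (hext : ∀ x : ℚ_[p], ‖algebraMap ℚ_[p] K x‖ = ‖x‖)
    (q : ℕ) (hq : 1 < q)
    (ord : K → ℤ)
    (hord : ∀ x : K, x ≠ 0 → ‖x‖ = (q : ℝ) ^ (-(ord x)))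
    (m : ℕ) (c lam α β : Fin m → K) (nn : Fin m → ℕ)
    (hnn : ∀ i, 0 < nn i) (hα : ∀ i, α i ≠ 0) (hβ : ∀ i, β i ≠ 0)
    (cond1 cond2 : Fin m → Bool)
    (Y : Set K)
    (hY : Y = ⋃ i : Fin m, {t : K |
      (cond1 i = true → ‖α i‖ < ‖t - c i‖) ∧
      (cond2 i = true → ‖t - c i‖ < ‖β i‖) ∧
      t - c i ∈ lam i • {x : K | ∃ w : K, w ≠ 0 ∧ w ^ (nn i) = x}}) :
    ∀ y : K, ∃ γ : ℕ, ∃ C : Set K,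
      (∀ u : K, (∃ w : K, w ≠ 0 ∧ w ^ (Finset.univ.lcm nn) = u) →
        ∀ t ∈ C, u * t ∈ C) ∧
      Y ∩ {t : K | t = y ∨ (γ : ℤ) ≤ ord (t - y)} =
        ((fun t => y + t) '' C) ∩ {t : K | t = y ∨ (γ : ℤ) ≤ ord (t - y)} := by
  intro y
  obtain ⟨x, hx⟩ := NormedField.exists_one_lt_norm ℚ_[p]
  have hx' : 1 < ‖algebraMap ℚ_[p] K x‖ := (hext x).symm ▸ hx
  let : NontriviallyNormedField K :=
    .ofNormNeOne ⟨_, norm_pos_iff.1 (one_pos.trans hx'), hx'.ne'⟩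
  have : CompleteSpace K := completeSpace_of_norm_algebraMap hext
  have : CharZero K := charZero_of_injective_algebraMap (algebraMap ℚ_[p] K).injective
  have hcone : IsLocalConeAt (nthPowers K (Finset.univ.lcm nn)) Y y := by
    rw [hY]
    exact .iUnion fun i =>
      (cell_isLocalConeAt (Nat.cast_ne_zero.2 (hnn i).ne') (hα i) (hβ i) y).mono
        (nthPowers_subset_of_dvd (Finset.dvd_lcm (Finset.mem_univ i)))
  exact hcone.exists_inter_ordBall_eq hq hord
end

section
/- Let K be a finite extension of Q_p, let Ω ⊆ K^m × K be open, and let M : Ω → K be a bounded differentiable function. Suppose on a subset A ⊆ Ω there are a ∈ ℚ with a < 0, c ∈ K^×, an index i, such that |∂M/∂x_i(x,t)| = |c|·|t|^a for all (x,t) ∈ A, where A contains a product B₁ × B' × W with B₁ an open ball in the x_i-line, and W ⊆ K^× having 0 in its closure, and such that for each fixed (remaining coordinates, t), the map x_i ↦ M satisfies |M(x_i,·) − M(x_i',·)| = |∂M/∂x_i|·|x_i − x_i'| on B₁ (the jacobian property). Then a contradiction arises: M cannot be bounded. Equivalently: under the jacobian property on B₁, the one-dimensional measure of the image M(B₁ ×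 {y}) equals μ₁(B₁)·|c|·|t|^a, which is unbounded as t → 0, contradicting boundedness of M. -/
open Filter Topology

/-- a bounded function `M` on `Ω ⊆ K × K^m × K` cannot satisfy the
jacobian property `‖M(x₁,y,t) - M(x₂,y,t)‖ = ‖c‖·‖t‖^a·‖x₁ - x₂‖` (with `a < 0`)
on a product `B₁ × B' × W` with `B₁` containing two distinct points and `0` in the
closure of `W ⊆ K^×`: a contradiction arises. -/
theorem stmt_19 {p : ℕ} [Fact (Nat.Prime p)] (K : Type*) [NormedField K]
    [Algebra ℚ_[p] K] [FiniteDimensional ℚ_[p] K] [IsUltrametricDist K]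
    (hext : ∀ x : ℚ_[p], ‖algebraMap ℚ_[p] K x‖ = ‖x‖)
    (m : ℕ) (Ω : Set (K × (Fin m → K) × K)) (M : K × (Fin m → K) × K → K)
    (Cb : ℝ) (hMbdd : ∀ w ∈ Ω, ‖M w‖ ≤ Cb)
    (B1 : Set K) (x x' : K) (hx : x ∈ B1) (hx' : x' ∈ B1) (hxx' : x ≠ x')
    (B' : Set (Fin m → K)) (y0 : Fin m → K) (hy0 : y0 ∈ B')
    (W : Set K) (hW0 : ∀ t ∈ W, t ≠ 0) (hWcl : (0 : K) ∈ closure W)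
    (hsub : ∀ x₁ ∈ B1, ∀ y ∈ B', ∀ t ∈ W, (x₁, y, t) ∈ Ω)
    (a : ℚ) (ha : a < 0) (cc : K) (hcc : cc ≠ 0)
    (hjac : ∀ y ∈ B', ∀ t ∈ W, ∀ x₁ ∈ B1, ∀ x₂ ∈ B1,
      ‖M (x₁, y, t) - M (x₂, y, t)‖ = ‖cc‖ * ‖t‖ ^ (a : ℝ) * ‖x₁ - x₂‖) :
    False := by
  have hC0 : (0:ℝ) < ‖cc‖ * ‖x - x'‖ := by
    apply mul_pos (norm_pos_iff.mpr hcc) (norm_pos_iff.mpr (sub_ne_zero.mpr hxx'))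
  set C0 : ℝ := ‖cc‖ * ‖x - x'‖ with hC0def
  set B : ℝ := 2 * max Cb 0 + 1 with hBdef
  have hB : (0:ℝ) < B := by positivity
  have haR : (a : ℝ) < 0 := by exact_mod_cast ha
  have hane : (a : ℝ) ≠ 0 := ne_of_lt haR
  set δ : ℝ := (B / C0) ^ (1 / (a : ℝ)) with hδdef
  have hδpos : 0 < δ := Real.rpow_pos_of_pos (div_pos hB hC0) _
  obtain ⟨t, htW, htδ⟩ : ∃ t ∈ W, dist (0 : K) t < δ :=
    Metric.mem_closure_iff.mp hWcl δ hδpos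
  have htn : ‖t‖ < δ := by simpa [dist_eq_norm] using htδ
  have htpos : 0 < ‖t‖ := norm_pos_iff.mpr (hW0 t htW)
  have hδa : δ ^ (a : ℝ) = B / C0 := by
    rw [hδdef, ← Real.rpow_mul (le_of_lt (div_pos hB hC0)),
      one_div, inv_mul_cancel₀ hane, Real.rpow_one]
  have hlt : δ ^ (a : ℝ) < ‖t‖ ^ (a : ℝ) :=
    Real.rpow_lt_rpow_of_neg htpos htn haR
  have hgt : B < C0 * ‖t‖ ^ (a : ℝ) := by
    calc B = C0 * (B / C0) := by field_simp
    _ = C0 * δ ^ (a:ℝ) := by rw [hδa]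
    _ < C0 * ‖t‖ ^ (a:ℝ) := by exact mul_lt_mul_of_pos_left hlt hC0
  have hj := hjac y0 hy0 t htW x hx x' hx'
  have h1 := hMbdd _ (hsub x hx y0 hy0 t htW)
  have h2 := hMbdd _ (hsub x' hx' y0 hy0 t htW)
  have hbound : ‖M (x, y0, t) - M (x', y0, t)‖ ≤ 2 * max Cb 0 := by
    calc ‖M (x, y0, t) - M (x', y0, t)‖ ≤ ‖M (x, y0, t)‖ + ‖M (x', y0, t)‖ :=
          norm_sub_le _ _
    _ ≤ max Cb 0 + max Cb 0 := add_le_add (h1.trans (le_max_left _ _))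
          (h2.trans (le_max_left _ _))
    _ = 2 * max Cb 0 := by ring
  rw [hj] at hbound
  have : ‖cc‖ * ‖t‖ ^ (a:ℝ) * ‖x - x'‖ = C0 * ‖t‖ ^ (a:ℝ) := by
    rw [hC0def]; ring
  rw [this] at hbound
  linarith
end
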